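/- For every permutation σ ∈ S_n and every 0 ≤ i ≤ n, the word σ|{1,...,i} (the subword of letters ≤ i) is itself a permutation in S_i, and standardization satisfies st(σ|{1,...,i}) = σ|{1,...,i}; moreover the map σ ↦ (σ|{1,...,i}, st(σ|{i+1,...,n})) together with the shuffle of positions reconstructs σ, making δ(σ) = Σ_{0≤i≤n} σ|{1,...,i} ⊗ st(σ|{i+1,...,n}) a coassociative coproduct on ℤS. -/

import Mathlib

/-- Standardization (0-based): replace each letter by its rank among the letters of `w`. -/
def stW (w : List ℕ) : List ℕ := w.map (fun x => (w.filter (· < x)).length)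

/-- `w` is the one-line word of a permutation of `{0, …, n-1}` where `n = w.length`. -/
def IsPermWord (w : List ℕ) : Prop := w.Perm (List.range w.length)

/-- The inversion set of a word: pairs `(j, i)` with `j > i` and `j` to the left of `i`. -/
def invSet (w : List ℕ) : Set (ℕ × ℕ) :=
  {p | p.2 < p.1 ∧ ∃ k l : ℕ, k < l ∧ w[k]? = some p.1 ∧ w[l]? = some p.2}

/-- The right weak order: inclusion of inversion sets. -/
def weakLe (u v : List ℕ) : Prop := invSet u ⊆ invSet v

/-- Left shifted concatenation `v △ u`: the word `v̄ u`, `v̄` being `v` shifted by `|u|`. -/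
def triangle (v u : List ℕ) : List ℕ := v.map (· + u.length) ++ u

/-- Right shifted concatenation `u □ v`: the word `u v̄`, `v̄` being `v` shifted by `|u|`. -/
def squareC (u v : List ℕ) : List ℕ := u ++ v.map (· + u.length)

lemma nodup_of_isPermWord {w : List ℕ} (h : IsPermWord w) : w.Nodup :=
  h.nodup_iff.mpr (List.nodup_range)

/-- Standardizing a word with distinct letters yields a permutation word. -/
lemma isPermWord_stW {w : List ℕ} (h : w.Nodup) : IsPermWord (stW w) := by
  show (stW w).Perm (List.range (stW w).length)
  classical
  set f : ℕ → ℕ := fun x => (w.filter (· < x)).length with hf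
  have hcard : ∀ x, f x = (w.toFinset.filter (· < x)).card := by
    intro x
    rw [hf]
    simp only
    rw [← List.toFinset_card_of_nodup (h.filter _)]
    congr 1
    ext z
    simp [List.mem_filter]
  have hmono : ∀ x ∈ w, ∀ y ∈ w, x < y → f x < f y := by
    intro x hx y hy hxy
    rw [hcard, hcard]
    apply Finset.card_lt_card
    constructor
    · intro z hz
      simp only [Finset.mem_filter, decide_eq_true_eq] at hz ⊢
      exact ⟨hz.1, lt_trans hz.2 hxy⟩
    · intro hcon
      have hxmem : x ∈ w.toFinset.filter (· < y) := by
        simp only [Finset.mem_filter, decide_eq_true_eq]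
        exact ⟨List.mem_toFinset.2 hx, hxy⟩
      have := hcon hxmem
      simp only [Finset.mem_filter, decide_eq_true_eq] at this
      exact lt_irrefl x this.2
  have hinj : ∀ x ∈ w, ∀ y ∈ w, f x = f y → x = y := by
    intro x hx y hy hxy
    rcases lt_trichotomy x y with h1 | h1 | h1
    · exact absurd hxy (Nat.ne_of_lt (hmono x hx y hy h1))
    · exact h1
    · exact absurd hxy.symm (Nat.ne_of_lt (hmono y hy x hx h1))
  have hltn : ∀ x ∈ w, f x < w.length := by
    intro x hx
    rw [hf]
    simp only
    refine List.length_filter_lt_length_iff_exists.2 ⟨x, hx, by simp⟩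
  have hnodup : (stW w).Nodup := List.Nodup.map_on hinj h
  have hlen : (stW w).length = w.length := by simp [stW]
  rw [hlen]
  refine (List.perm_ext_iff_of_nodup hnodup (List.nodup_range)).2 ?_
  intro k
  simp only [List.mem_range]
  constructor
  · rintro hk
    simp only [stW, List.mem_map] at hk
    obtain ⟨x, hx, rfl⟩ := hk
    exact hltn x hx
  · intro hk
    -- surjectivity via cardinality
    have himage : w.toFinset.image f = Finset.range w.length := by
      apply Finset.eq_of_subset_of_card_le
      · intro m hm
        simp only [Finset.mem_image, List.mem_toFinset] at hm
        obtain ⟨x, hx, rfl⟩ := hm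
        exact Finset.mem_range.2 (hltn x hx)
      · rw [Finset.card_range, Finset.card_image_of_injOn ?_]
        · rw [List.toFinset_card_of_nodup h]
        · intro x hx y hy
          exact hinj x (List.mem_toFinset.1 hx) y (List.mem_toFinset.1 hy)
    have : k ∈ w.toFinset.image f := by rw [himage]; exact Finset.mem_range.2 hk
    simp only [Finset.mem_image, List.mem_toFinset] at this
    obtain ⟨x, hx, rfl⟩ := this
    simp only [stW, List.mem_map]
    exact ⟨x, hx, rfl⟩


lemma isPermWord_stW_filter {w : List ℕ} (h : IsPermWord w)
    (p : ℕ → Bool) : IsPermWord (stW (w.filter p)) :=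
  isPermWord_stW ((nodup_of_isPermWord h).filter _)

lemma isPermWord_filter_lt {w : List ℕ} (h : IsPermWord w) (i : ℕ) :
    IsPermWord (w.filter (· < i)) := by
  have h1 : (w.filter (· < i)).Perm ((List.range w.length).filter (· < i)) := h.filter _
  have h2 : ((List.range w.length).filter (· < i)).Perm (List.range (min i w.length)) := by
    refine (List.perm_ext_iff_of_nodup ((List.nodup_range).filter _) (List.nodup_range)).2 ?_
    intro x
    simp only [List.mem_filter, List.mem_range, decide_eq_true_eq, lt_min_iff]
    tauto
  have h3 := h1.trans h2
  have hl : (w.filter (· < i)).length = min i w.length := by simpa using h3.length_eq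
  unfold IsPermWord
  rw [hl]; exact h3

/-- The type of permutation words. -/
abbrev PW : Type := {w : List ℕ // IsPermWord w}

/-- `ℤS`: the free `ℤ`-module on the set of all permutations. -/
abbrev ZS : Type := PW →₀ ℤ

open scoped TensorProduct

/-- The coproduct on a basis permutation:
`δ(σ) = Σ_{0 ≤ i ≤ n} σ|{1,…,i} ⊗ st(σ|{i+1,…,n})`. -/
noncomputable def deltaWord (w : PW) : ZS ⊗[ℤ] ZS :=
  ∑ i ∈ Finset.range (w.1.length + 1),
    Finsupp.single (⟨w.1.filter (· < i), isPermWord_filter_lt w.2 i⟩ : PW) (1 : ℤ) ⊗ₜ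
      Finsupp.single
        (⟨stW (w.1.filter (fun x => i ≤ x)), isPermWord_stW_filter w.2 _⟩ : PW) (1 : ℤ)

/-- The coproduct `δ` of the Malvenuto–Reutenauer Hopf algebra `ℤS`
(standardized unshuffling), as a `ℤ`-linear map. -/
noncomputable def Delta : ZS →ₗ[ℤ] ZS ⊗[ℤ] ZS :=
  Finsupp.lsum ℤ (fun w => LinearMap.toSpanSingleton ℤ _ (deltaWord w))

/-- The finite set of all permutation words of `{0,…,n-1}`. -/
def permsOf (n : ℕ) : Finset (List ℕ) := (List.range n).permutations.toFinset

/-- `Shuffle u v w` : `w` is a shuffle of `u` and `v`. -/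
inductive Shuffle : List ℕ → List ℕ → List ℕ → Prop
  | nil : Shuffle [] [] []
  | left {u v w : List ℕ} (a : ℕ) : Shuffle u v w → Shuffle (a :: u) v (a :: w)
  | right {u v w : List ℕ} (a : ℕ) : Shuffle u v w → Shuffle u (a :: v) (a :: w)

/-! Restricting a permutation word to its letters `< i` leaves a permutation word, and
standardization ignores strictly increasing relabelings, so standardizing the letters `≥ j`
just subtracts `j`. Hence cutting at `j + k` and then at `j`, or at `j` and then (after
standardizing) at `k`, yields the same three pieces `σ|<j`, `st σ|[j, j+k)`, `st σ|≥j+k`;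
both iterated coproducts of `σ` are the sum of these triples over `j + k ≤ n`. -/

namespace IsPermWord

variable {w : List ℕ}

lemma filter_perm (h : IsPermWord w) (p : ℕ → Bool) :
    (w.filter p).Perm ((List.Ico 0 w.length).filter p) := by
  rw [List.Ico.zero_bot]
  exact h.filter p

lemma filter_lt_perm_range (h : IsPermWord w) {i : ℕ} (hi : i ≤ w.length) :
    (w.filter (· < i)).Perm (List.range i) := by
  have := h.filter_perm (· < i)
  rwa [List.Ico.filter_lt, min_eq_right hi, List.Ico.zero_bot] at this

lemma length_filter_lt (h : IsPermWord w) {i : ℕ} (hi : i ≤ w.length) :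
    (w.filter (· < i)).length = i := by
  simpa using (h.filter_lt_perm_range hi).length_eq

lemma length_filter_le (h : IsPermWord w) (j : ℕ) :
    (w.filter (fun x => j ≤ x)).length = w.length - j := by
  have := (h.filter_perm (fun x => j ≤ x)).length_eq
  rwa [List.Ico.filter_le, List.Ico.length, Nat.zero_max] at this

lemma stW_eq (h : IsPermWord w) : stW w = w := by
  refine (List.map_congr_left fun x hx => ?_).trans (List.map_id w)
  exact h.length_filter_lt (h.mem_iff.1 hx |> List.mem_range.1).le

end IsPermWord

lemma stW_map_of_strictMonoOn {u : List ℕ} {f : ℕ → ℕ} (hf : StrictMonoOn f {x | x ∈ u}) :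
    stW (u.map f) = stW u := by
  rw [stW, List.map_map]
  refine List.map_congr_left fun x hx => ?_
  rw [Function.comp_apply, List.filter_map, List.length_map]
  congr 1
  exact List.filter_congr fun y hy => by simp [hf.lt_iff_lt hy hx]

lemma stW_map_sub {u : List ℕ} {j : ℕ} (hu : ∀ x ∈ u, j ≤ x) :
    stW (u.map (· - j)) = stW u :=
  stW_map_of_strictMonoOn fun x hx _ _ hxy => Nat.sub_lt_sub_right (hu x hx) hxy

lemma le_of_mem_filter_le {w : List ℕ} {j x : ℕ} (hx : x ∈ w.filter (fun x => j ≤ x)) :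
    j ≤ x :=
  of_decide_eq_true (List.mem_filter.1 hx).2

lemma IsPermWord.stW_filter_le {w : List ℕ} (h : IsPermWord w) (j : ℕ) :
    stW (w.filter (fun x => j ≤ x)) = (w.filter (fun x => j ≤ x)).map (· - j) := by
  have hperm : IsPermWord ((w.filter (fun x => j ≤ x)).map (· - j)) := by
    have := (h.filter_perm (fun x => j ≤ x)).map (· - j)
    rwa [List.Ico.filter_le, Nat.zero_max, List.Ico.map_sub _ _ _ le_rfl, Nat.sub_self,
      List.Ico.zero_bot, ← h.length_filter_le j, ← List.length_map (f := (· - j))] at this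
  rw [← stW_map_sub fun x => le_of_mem_filter_le, hperm.stW_eq]

lemma Shuffle.filter (p q : ℕ → Bool) (w : List ℕ) (hpq : ∀ x ∈ w, q x = !p x) :
    Shuffle (w.filter p) (w.filter q) w := by
  induction w with
  | nil => exact Shuffle.nil
  | cons a w ih =>
    have ih := ih fun x hx => hpq x (List.mem_cons_of_mem a hx)
    cases hp : p a
    · rw [List.filter_cons_of_neg (by simp [hp]), List.filter_cons_of_pos (by simp [hpq, hp])]
      exact Shuffle.right a ih
    · rw [List.filter_cons_of_pos hp, List.filter_cons_of_neg (by simp [hpq, hp])]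
      exact Shuffle.left a ih

namespace PW

def lower (σ : PW) (i : ℕ) : PW := ⟨σ.1.filter (· < i), isPermWord_filter_lt σ.2 i⟩

def upper (σ : PW) (i : ℕ) : PW :=
  ⟨stW (σ.1.filter (fun x => i ≤ x)), isPermWord_stW_filter σ.2 _⟩

variable (σ : PW)

lemma length_lower {i : ℕ} (hi : i ≤ σ.1.length) : (σ.lower i).1.length = i :=
  σ.2.length_filter_lt hi

lemma length_upper (j : ℕ) : (σ.upper j).1.length = σ.1.length - j := by
  simp [upper, stW, σ.2.length_filter_le]

lemma lower_lower {i j : ℕ} (hji : j ≤ i) : (σ.lower i).lower j = σ.lower j := by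
  refine Subtype.ext ?_
  simp only [lower, List.filter_filter]
  exact List.filter_congr fun x _ => by simp; omega

lemma upper_lower (j k : ℕ) : (σ.lower (j + k)).upper j = (σ.upper j).lower k := by
  refine Subtype.ext (Eq.trans ?_ ((σ.upper j).lower k).2.stW_eq)
  simp only [upper, lower]
  rw [σ.2.stW_filter_le j, List.filter_map,
    stW_map_sub fun x hx => le_of_mem_filter_le (List.mem_of_mem_filter hx),
    List.filter_filter, List.filter_filter]
  exact congrArg stW (List.filter_congr fun x _ => by rw [Bool.eq_iff_iff]; simp; omega)

lemma upper_upper (j k : ℕ) : (σ.upper j).upper k = σ.upper (j + k) := by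
  refine Subtype.ext ?_
  simp only [upper]
  rw [σ.2.stW_filter_le j, List.filter_map,
    stW_map_sub fun x hx => le_of_mem_filter_le (List.mem_of_mem_filter hx), List.filter_filter]
  exact congrArg stW (List.filter_congr fun x _ => by rw [Bool.eq_iff_iff]; simp; omega)

end PW

lemma Delta_single (σ : PW) :
    Delta (Finsupp.single σ 1) = ∑ i ∈ Finset.range (σ.1.length + 1),
      Finsupp.single (σ.lower i) (1 : ℤ) ⊗ₜ Finsupp.single (σ.upper i) (1 : ℤ) := by
  simp [Delta, deltaWord, PW.lower, PW.upper]

open TensorProduct in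
lemma assoc_map_Delta_id_Delta_single (σ : PW) :
    TensorProduct.assoc ℤ ZS ZS ZS (map Delta LinearMap.id (Delta (Finsupp.single σ 1))) =
      ∑ i ∈ Finset.range (σ.1.length + 1), ∑ j ∈ Finset.range (i + 1),
        Finsupp.single ((σ.lower i).lower j) (1 : ℤ) ⊗ₜ
          (Finsupp.single ((σ.lower i).upper j) (1 : ℤ) ⊗ₜ
            Finsupp.single (σ.upper i) (1 : ℤ)) := by
  simp only [Delta_single, map_sum, map_tmul, LinearMap.id_apply, sum_tmul]
  -- `erw`: the codomain of `Delta` carries the `ℤ`-module structure `AddCommGroup.toIntModule`,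
  -- which agrees with `TensorProduct.instModule`, as `assoc` expects, only up to unfolding.
  erw [map_sum]
  refine Finset.sum_congr rfl fun i hi => ?_
  erw [map_sum]
  rw [σ.length_lower (Nat.lt_succ_iff.1 (Finset.mem_range.1 hi))]
  exact Finset.sum_congr rfl fun j _ => assoc_tmul _ _ _

open TensorProduct in
lemma map_id_Delta_Delta_single (σ : PW) :
    map LinearMap.id Delta (Delta (Finsupp.single σ 1)) =
      ∑ j ∈ Finset.range (σ.1.length + 1), ∑ k ∈ Finset.range (σ.1.length + 1 - j),
        Finsupp.single (σ.lower j) (1 : ℤ) ⊗ₜ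
          (Finsupp.single ((σ.upper j).lower k) (1 : ℤ) ⊗ₜ
            Finsupp.single ((σ.upper j).upper k) (1 : ℤ)) := by
  simp only [Delta_single, map_sum, map_tmul, LinearMap.id_apply, tmul_sum]
  refine Finset.sum_congr rfl fun j hj => ?_
  rw [σ.length_upper, Nat.sub_add_comm (Nat.lt_succ_iff.1 (Finset.mem_range.1 hj))]

/-- For a permutation `σ ∈ S_n` and `0 ≤ i ≤ n`, the subword
`σ|{1,…,i}` of the `i` smallest letters is itself a permutation word in `S_i`
(so `st(σ|{1,…,i}) = σ|{1,…,i}`), and `σ` is reconstructed as a shuffle of its two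
subwords; moreover `δ(σ) = Σ_i σ|{1,…,i} ⊗ st(σ|{i+1,…,n})` is a coassociative
coproduct on `ℤS`. -/
theorem delta_coassociative :
    (∀ σ : PW, ∀ i : ℕ, i ≤ σ.1.length →
      (σ.1.filter (· < i)).Perm (List.range i) ∧
      stW (σ.1.filter (· < i)) = σ.1.filter (· < i) ∧
      Shuffle (σ.1.filter (· < i)) (σ.1.filter (fun x => i ≤ x)) σ.1) ∧
    (TensorProduct.assoc ℤ ZS ZS ZS).toLinearMap ∘ₗ
        (TensorProduct.map Delta LinearMap.id) ∘ₗ Delta =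
      (TensorProduct.map LinearMap.id Delta) ∘ₗ Delta := by
  refine ⟨fun σ i hi => ⟨σ.2.filter_lt_perm_range hi, (isPermWord_filter_lt σ.2 i).stW_eq,
    Shuffle.filter _ _ σ.1 fun x _ => by grind⟩, ?_⟩
  refine Finsupp.lhom_ext' fun σ => LinearMap.ext_ring ?_
  change TensorProduct.assoc ℤ ZS ZS ZS
      (TensorProduct.map Delta LinearMap.id (Delta (Finsupp.single σ 1))) =
    TensorProduct.map LinearMap.id Delta (Delta (Finsupp.single σ 1))
  rw [assoc_map_Delta_id_Delta_single, map_id_Delta_Delta_single, ← Finset.sum_range_diag_flip]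
  refine Finset.sum_congr rfl fun i _ => Finset.sum_congr rfl fun j hj => ?_
  obtain ⟨k, rfl⟩ := Nat.exists_eq_add_of_le (Nat.lt_succ_iff.1 (Finset.mem_range.1 hj))
  rw [Nat.add_sub_cancel_left, σ.lower_lower (Nat.le_add_right j k), σ.upper_lower,
    σ.upper_upper]
  rfl
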